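/- arXiv:1603.05612 — 5 statements merged into one kernel-verified Lean document; each statement's English description precedes it below -/
import Mathlib

section
/- Let a : ℤ → ℝ be even (a(−j) = a(j)) and let b : ℤ → ℂ be finitely supported. Define B_j = (b_j − b_{−j})/√2 for j ≥ 1. Then Σ_{j≥1} Σ_{k≥1} (a(j−k) − a(j+k)) conj(B_j) B_k = (1/2) Σ_{j∈ℤ} Σ_{k∈ℤ} (a(j−k) − a(j+k)) conj(b_j) b_k. (This identifies the local half-line model with the nonlocal Sp(2N)-type model of Keating–Mezzadri.) -/
/-!
Identification of the local half-line model (ordinary boundary) with the nonlocal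
`Sp(2N)`-type model of Keating–Mezzadri: rewriting the half-line quadratic form in
the odd combinations `B_j = (b_j − b_{−j})/√2` gives half of the full-line quadratic
form with hopping `a(j−k) − a(j+k)`.
-/

private lemma hl_conj_div_mul (x y : ℂ) :
    (starRingEnd ℂ) (x / ((Real.sqrt 2 : ℝ) : ℂ)) * (y / ((Real.sqrt 2 : ℝ) : ℂ))
      = (1/2 : ℂ) * ((starRingEnd ℂ) x * y) := by
  have h : ((Real.sqrt 2 : ℝ) : ℂ) * ((Real.sqrt 2 : ℝ) : ℂ) = 2 := by
    rw [← Complex.ofReal_mul, Real.mul_self_sqrt (by norm_num : (0:ℝ) ≤ 2)]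
    norm_num
  rw [map_div₀, Complex.conj_ofReal, div_mul_div_comm, h]
  ring

private lemma hl_sum_symm (T : Finset ℤ) (hT : ∀ j ∈ T, -j ∈ T) (g : ℤ → ℂ)
    (hg : g 0 = 0) :
    ∑ j ∈ T, g j = ∑ j ∈ T.filter (fun n => 1 ≤ n), (g j + g (-j)) := by
  classical
  rw [Finset.sum_add_distrib]
  rw [← Finset.sum_filter_add_sum_filter_not T (fun n => 1 ≤ n) g]
  congr 1
  have h1 : ∑ j ∈ T.filter (fun n => ¬ 1 ≤ n), g j
      = ∑ j ∈ T.filter (fun n => n ≤ -1), g j := by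
    refine (Finset.sum_subset ?_ ?_).symm
    · intro x hx
      simp only [Finset.mem_filter] at hx ⊢
      refine ⟨hx.1, ?_⟩
      omega
    · intro x hx hx'
      simp only [Finset.mem_filter] at hx hx'
      have h2 : ¬ x ≤ -1 := fun h => hx' ⟨hx.1, h⟩
      have : x = 0 := by omega
      rw [this, hg]
  rw [h1]
  refine Finset.sum_nbij' (i := fun j => -j) (j := fun j => -j) ?_ ?_ ?_ ?_ ?_
  · intro x hx
    simp only [Finset.mem_filter] at hx ⊢
    exact ⟨hT x hx.1, by omega⟩
  · intro x hx
    simp only [Finset.mem_filter] at hx ⊢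
    exact ⟨hT x hx.1, by omega⟩
  · intro x _; ring
  · intro x _; ring
  · intro x _
    simp

/-- Let `a : ℤ → ℝ` be even and `b : ℤ → ℂ` finitely supported, and set
`B_j = (b_j − b_{−j})/√2` for `j ≥ 1`.  Then
`Σ_{j≥1} Σ_{k≥1} (a(j−k) − a(j+k)) conj(B_j) B_k
  = (1/2) Σ_{j∈ℤ} Σ_{k∈ℤ} (a(j−k) − a(j+k)) conj(b_j) b_k`. -/
theorem halfline_eq_Sp_model (a : ℤ → ℝ) (heven : ∀ j : ℤ, a (-j) = a j)
    (b : ℤ → ℂ) (hfin : (Function.support b).Finite)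
    (B : ℤ → ℂ) (hB : ∀ j : ℤ, 1 ≤ j → B j = (b j - b (-j)) / ((Real.sqrt 2 : ℝ) : ℂ)) :
    ∑' (j : {n : ℤ // 1 ≤ n}) (k : {n : ℤ // 1 ≤ n}),
        ((a ((j : ℤ) - (k : ℤ)) - a ((j : ℤ) + (k : ℤ)) : ℝ) : ℂ)
          * (starRingEnd ℂ) (B (j : ℤ)) * B (k : ℤ)
      = (1/2 : ℂ) * ∑' (j : ℤ) (k : ℤ),
          ((a (j - k) - a (j + k) : ℝ) : ℂ) * (starRingEnd ℂ) (b j) * b k := by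
  classical
  set S : Finset ℤ := hfin.toFinset with hS
  set T : Finset ℤ := (S ∪ S.image (fun n => -n)) ∪ {0} with hT
  have h0T : (0 : ℤ) ∈ T := by simp [hT]
  have hTsymm : ∀ j ∈ T, -j ∈ T := by
    intro j hj
    simp only [hT, Finset.mem_union, Finset.mem_image, Finset.mem_singleton] at hj ⊢
    rcases hj with (hj | hj) | hj
    · exact Or.inl (Or.inr ⟨j, hj, rfl⟩)
    · rcases hj with ⟨x, hx, rfl⟩
      exact Or.inl (Or.inl (by simpa using hx))
    · right; omega
  have hbT : ∀ j : ℤ, j ∉ T → b j = 0 ∧ b (-j) = 0 := by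
    intro j hj
    simp only [hT, Finset.mem_union, Finset.mem_image, not_or] at hj
    constructor
    · by_contra h
      exact hj.1.1 (by simp [hS, Function.mem_support, h])
    · by_contra h
      exact hj.1.2 ⟨-j, by simp [hS, Function.mem_support, h], by ring⟩
  have hBT : ∀ j : ℤ, 1 ≤ j → j ∉ T → B j = 0 := by
    intro j hj hjT
    rw [hB j hj, (hbT j hjT).1, (hbT j hjT).2]
    simp
  set Tp : Finset ℤ := T.filter (fun n => 1 ≤ n) with hTp
  set f : ℤ → ℤ → ℂ := fun j k =>
    ((a (j - k) - a (j + k) : ℝ) : ℂ) * (starRingEnd ℂ) (b j) * b k with hf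
  set g : ℤ → ℤ → ℂ := fun j k =>
    ((a (j - k) - a (j + k) : ℝ) : ℂ) * (starRingEnd ℂ) (B j) * B k with hg
  -- LHS to finite sum
  have hLinner : ∀ j : {n : ℤ // 1 ≤ n},
      (∑' k : {n : ℤ // 1 ≤ n}, g (j : ℤ) (k : ℤ)) = ∑ k ∈ Tp, g (j : ℤ) k := by
    intro j
    rw [tsum_eq_sum (s := T.subtype (fun n => 1 ≤ n))
      (fun k hk => by
        have : (k : ℤ) ∉ T := fun h => hk (Finset.mem_subtype.mpr h)
        simp [hg, hBT _ k.2 this])]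
    rw [hTp]
    exact Finset.sum_subtype_eq_sum_filter (s := T) (fun k => g (j : ℤ) k)
  have hL : (∑' (j : {n : ℤ // 1 ≤ n}) (k : {n : ℤ // 1 ≤ n}), g (j : ℤ) (k : ℤ))
      = ∑ j ∈ Tp, ∑ k ∈ Tp, g j k := by
    rw [tsum_congr hLinner]
    rw [tsum_eq_sum (s := T.subtype (fun n => 1 ≤ n))
      (fun j hj => by
        have : (j : ℤ) ∉ T := fun h => hj (Finset.mem_subtype.mpr h)
        exact Finset.sum_eq_zero fun k _ => by simp [hg, hBT _ j.2 this])]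
    rw [hTp]
    exact Finset.sum_subtype_eq_sum_filter (s := T) (fun j => ∑ k ∈ Tp, g j k)
  -- RHS to finite sum
  have hRinner : ∀ j : ℤ, (∑' k : ℤ, f j k) = ∑ k ∈ T, f j k := by
    intro j
    refine tsum_eq_sum fun k hk => ?_
    simp [hf, (hbT k hk).1]
  have hR : (∑' (j : ℤ) (k : ℤ), f j k) = ∑ j ∈ T, ∑ k ∈ T, f j k := by
    rw [tsum_congr hRinner]
    refine tsum_eq_sum fun j hj => ?_
    exact Finset.sum_eq_zero fun k _ => by simp [hf, (hbT j hj).1]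
  -- fold full-line sum
  have hf0 : ∀ j : ℤ, f j 0 = 0 := by
    intro j; simp [hf]
  have h0f : ∀ k : ℤ, f 0 k = 0 := by
    intro k; simp [hf, zero_sub, zero_add, heven k]
  have hfold : ∑ j ∈ T, ∑ k ∈ T, f j k
      = ∑ j ∈ Tp, ∑ k ∈ Tp, ((f j k + f j (-k)) + (f (-j) k + f (-j) (-k))) := by
    rw [hl_sum_symm T hTsymm _ (Finset.sum_eq_zero fun k _ => h0f k)]
    refine Finset.sum_congr rfl fun j _ => ?_
    rw [hl_sum_symm T hTsymm (fun k => f j k) (hf0 j),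
        hl_sum_symm T hTsymm (fun k => f (-j) k) (hf0 (-j)),
        ← Finset.sum_add_distrib]
  -- pointwise identity
  have hpt : ∀ j ∈ Tp, ∀ k ∈ Tp,
      g j k = (1/2 : ℂ) * ((f j k + f j (-k)) + (f (-j) k + f (-j) (-k))) := by
    intro j hj k hk
    have hj1 : 1 ≤ j := (Finset.mem_filter.mp hj).2
    have hk1 : 1 ≤ k := (Finset.mem_filter.mp hk).2
    have e1 : a (-j - k) = a (j + k) := by
      rw [show -j - k = -(j + k) by ring, heven]
    have e2 : a (-j + k) = a (j - k) := by
      rw [show -j + k = -(j - k) by ring, heven]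
    have e3 : a (j - -k) = a (j + k) := by rw [show j - -k = j + k by ring]
    have e4 : a (j + -k) = a (j - k) := by rw [show j + -k = j - k by ring]
    have e5 : a (-j - -k) = a (j - k) := by
      rw [show -j - -k = -(j - k) by ring, heven]
    have e6 : a (-j + -k) = a (j + k) := by
      rw [show -j + -k = -(j + k) by ring, heven]
    simp only [hg, hf, e1, e2, e3, e4, e5, e6, hB j hj1, hB k hk1]
    rw [mul_assoc, hl_conj_div_mul]
    simp only [map_sub]
    push_cast
    ring
  calc ∑' (j : {n : ℤ // 1 ≤ n}) (k : {n : ℤ // 1 ≤ n}), g (j : ℤ) (k : ℤ)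
      = ∑ j ∈ Tp, ∑ k ∈ Tp, g j k := hL
    _ = ∑ j ∈ Tp, ∑ k ∈ Tp,
          (1/2 : ℂ) * ((f j k + f j (-k)) + (f (-j) k + f (-j) (-k))) := by
        exact Finset.sum_congr rfl fun j hj => Finset.sum_congr rfl fun k hk => hpt j hj k hk
    _ = (1/2 : ℂ) * ∑ j ∈ Tp, ∑ k ∈ Tp, ((f j k + f j (-k)) + (f (-j) k + f (-j) (-k))) := by
        rw [Finset.mul_sum]
        exact Finset.sum_congr rfl fun j _ => (Finset.mul_sum _ _ _).symm
    _ = (1/2 : ℂ) * ∑ j ∈ T, ∑ k ∈ T, f j k := by rw [hfold]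
    _ = (1/2 : ℂ) * ∑' (j : ℤ) (k : ℤ), f j k := by rw [hR]
end

section
/- Let a : ℤ → ℝ be even (a(−j) = a(j)), let ε ∈ {+1, −1}, and let x : ℕ → ℂ be finitely supported. Define the reflected sequence x̃ : ℤ → ℂ by x̃_j = x_j for j ≥ 0 and x̃_j = ε·x_{−j−1} for j < 0. Then Σ_{j≥0} Σ_{k≥0} (a(j−k) + ε·a(j+k+1)) conj(x_j) x_k = (1/2) Σ_{j∈ℤ} Σ_{k∈ℤ} a(j−k) conj(x̃_j) x̃_k. (Method of images with reflection about the half-integer point −1/2; ε = −1 corresponds to the O^+(2N+1)-type model and ε = +1 to the O^−(2N+1)-type model.) -/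
/-!
Method of images with reflection about the half-integer point `−1/2`: for an even
hopping function `a`, a sign `ε = ±1` and a finitely supported `x : ℕ → ℂ`, reflecting
`x` to `x̃` on the full line by `x̃_j = x_j` for `j ≥ 0` and `x̃_j = ε x_{−j−1}` for
`j < 0`, the boundary quadratic form with hopping `a(j−k) + ε a(j+k+1)` equals half the
translation-invariant quadratic form of `x̃`.  (`ε = −1` corresponds to the
`O^+(2N+1)`-type model and `ε = +1` to the `O^−(2N+1)`-type model.)
-/

/-- Method of images about the point `−1/2`:
`Σ_{j≥0} Σ_{k≥0} (a(j−k) + ε a(j+k+1)) conj(x_j) x_k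
  = (1/2) Σ_{j∈ℤ} Σ_{k∈ℤ} a(j−k) conj(x̃_j) x̃_k`. -/
theorem method_of_images_half_integer (a : ℤ → ℝ) (heven : ∀ j : ℤ, a (-j) = a j)
    (ε : ℝ) (hε : ε = 1 ∨ ε = -1)
    (x : ℕ → ℂ) (hfin : (Function.support x).Finite)
    (xt : ℤ → ℂ) (hxt_nonneg : ∀ n : ℕ, xt (n : ℤ) = x n)
    (hxt_neg : ∀ n : ℕ, xt (-(n : ℤ) - 1) = (ε : ℂ) * x n) :
    ∑' (j : ℕ) (k : ℕ),
        ((a ((j : ℤ) - (k : ℤ)) + ε * a ((j : ℤ) + (k : ℤ) + 1) : ℝ) : ℂ)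
          * (starRingEnd ℂ) (x j) * x k
      = (1/2 : ℂ) * ∑' (j : ℤ) (k : ℤ),
          ((a (j - k) : ℝ) : ℂ) * (starRingEnd ℂ) (xt j) * xt k := by
  have hε2 : (ε : ℂ) * (ε : ℂ) = 1 := by
    rcases hε with h | h <;> norm_num [h]
  have hneg : ∀ n : ℕ, xt (-((n : ℤ) + 1)) = (ε : ℂ) * x n := fun n => by
    rw [show -((n : ℤ) + 1) = -(n : ℤ) - 1 by ring]; exact hxt_neg n
  -- summability from finite support of `x`
  have key : ∀ f : ℕ → ℂ, (∀ n, x n = 0 → f n = 0) → Summable f := by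
    intro f hf
    apply summable_of_finite_support
    exact hfin.subset fun n hn hx => hn (hf n hx)
  -- the two halves of the boundary quadratic form
  set A := ∑' (j : ℕ) (k : ℕ),
      ((a ((j : ℤ) - (k : ℤ)) : ℝ) : ℂ) * (starRingEnd ℂ) (x j) * x k with hA
  set B := ∑' (j : ℕ) (k : ℕ),
      (ε : ℂ) * ((a ((j : ℤ) + (k : ℤ) + 1) : ℝ) : ℂ) * (starRingEnd ℂ) (x j) * x k with hB
  -- LHS = A + B
  have hLHS : ∑' (j : ℕ) (k : ℕ),
        ((a ((j : ℤ) - (k : ℤ)) + ε * a ((j : ℤ) + (k : ℤ) + 1) : ℝ) : ℂ)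
          * (starRingEnd ℂ) (x j) * x k = A + B := by
    have hsum1 : ∀ j : ℕ, Summable fun k : ℕ =>
        ((a ((j : ℤ) - (k : ℤ)) : ℝ) : ℂ) * (starRingEnd ℂ) (x j) * x k :=
      fun j => key _ fun n hx => by simp [hx]
    have hsum2 : ∀ j : ℕ, Summable fun k : ℕ =>
        (ε : ℂ) * ((a ((j : ℤ) + (k : ℤ) + 1) : ℝ) : ℂ) * (starRingEnd ℂ) (x j) * x k :=
      fun j => key _ fun n hx => by simp [hx]
    have hinner : ∀ j : ℕ, ∑' (k : ℕ),
        ((a ((j : ℤ) - (k : ℤ)) + ε * a ((j : ℤ) + (k : ℤ) + 1) : ℝ) : ℂ)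
          * (starRingEnd ℂ) (x j) * x k
        = (∑' (k : ℕ), ((a ((j : ℤ) - (k : ℤ)) : ℝ) : ℂ) * (starRingEnd ℂ) (x j) * x k)
          + ∑' (k : ℕ),
            (ε : ℂ) * ((a ((j : ℤ) + (k : ℤ) + 1) : ℝ) : ℂ) * (starRingEnd ℂ) (x j) * x k := by
      intro j
      rw [← Summable.tsum_add (hsum1 j) (hsum2 j)]
      refine tsum_congr fun k => ?_
      push_cast
      ring
    rw [tsum_congr hinner, hA, hB]
    refine Summable.tsum_add ?_ ?_
    · refine key _ fun j hx => ?_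
      simp [hx]
    · refine key _ fun j hx => ?_
      simp [hx]
  rw [hLHS]
  -- name the summand on the full line
  set g : ℤ → ℤ → ℂ := fun j k => ((a (j - k) : ℝ) : ℂ) * (starRingEnd ℂ) (xt j) * xt k
    with hg
  -- term identities in the four quadrants
  have T1 : ∀ j k : ℕ, g (j : ℤ) (k : ℤ)
      = ((a ((j : ℤ) - (k : ℤ)) : ℝ) : ℂ) * (starRingEnd ℂ) (x j) * x k := fun j k => by
    simp [hg, hxt_nonneg]
  have T2 : ∀ j k : ℕ, g (j : ℤ) (-((k : ℤ) + 1))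
      = (ε : ℂ) * ((a ((j : ℤ) + (k : ℤ) + 1) : ℝ) : ℂ) * (starRingEnd ℂ) (x j) * x k := by
    intro j k
    simp only [hg, hxt_nonneg, hneg]
    rw [show (j : ℤ) - -((k : ℤ) + 1) = (j : ℤ) + (k : ℤ) + 1 by ring]
    ring
  have T3 : ∀ j k : ℕ, g (-((j : ℤ) + 1)) (k : ℤ)
      = (ε : ℂ) * ((a ((j : ℤ) + (k : ℤ) + 1) : ℝ) : ℂ) * (starRingEnd ℂ) (x j) * x k := by
    intro j k
    simp only [hg, hxt_nonneg, hneg]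
    rw [show -((j : ℤ) + 1) - (k : ℤ) = -((j : ℤ) + (k : ℤ) + 1) by ring, heven,
      map_mul, Complex.conj_ofReal]
    ring
  have T4 : ∀ j k : ℕ, g (-((j : ℤ) + 1)) (-((k : ℤ) + 1))
      = ((a ((j : ℤ) - (k : ℤ)) : ℝ) : ℂ) * (starRingEnd ℂ) (x j) * x k := by
    intro j k
    simp only [hg, hneg]
    rw [show -((j : ℤ) + 1) - -((k : ℤ) + 1) = -((j : ℤ) - (k : ℤ)) by ring, heven,
      map_mul, Complex.conj_ofReal]
    calc ((a ((j:ℤ) - (k:ℤ)) : ℝ) : ℂ) * ((ε : ℂ) * (starRingEnd ℂ) (x j))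
          * ((ε : ℂ) * x k)
        = ((ε : ℂ) * (ε : ℂ)) * (((a ((j:ℤ) - (k:ℤ)) : ℝ) : ℂ) * (starRingEnd ℂ) (x j) * x k) :=
          by ring
      _ = _ := by rw [hε2, one_mul]
  -- summability of rows
  have hrow1 : ∀ j : ℤ, Summable fun k : ℕ => g j (k : ℤ) := fun j =>
    key _ fun n hx => by simp [hg, hxt_nonneg, hx]
  have hrow2 : ∀ j : ℤ, Summable fun k : ℕ => g j (-((k : ℤ) + 1)) := fun j =>
    key _ fun n hx => by
      simp only [hg]
      rw [hneg n, hx, mul_zero, mul_zero]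
  -- split the inner sum
  have hinnerZ : ∀ j : ℤ, ∑' (k : ℤ), g j k
      = (∑' (k : ℕ), g j (k : ℤ)) + ∑' (k : ℕ), g j (-((k : ℤ) + 1)) := fun j =>
    tsum_of_nat_of_neg_add_one (hrow1 j) (hrow2 j)
  -- vanishing of rows when the corresponding `x` entry vanishes
  have hz1 : ∀ j : ℕ, x j = 0 → (∑' (k : ℤ), g (j : ℤ) k) = 0 := by
    intro j hx
    have : ∀ k : ℤ, g (j : ℤ) k = 0 := fun k => by simp [hg, hxt_nonneg, hx]
    rw [tsum_congr this]; exact tsum_zero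
  have hz2 : ∀ j : ℕ, x j = 0 → (∑' (k : ℤ), g (-((j : ℤ) + 1)) k) = 0 := by
    intro j hx
    have : ∀ k : ℤ, g (-((j : ℤ) + 1)) k = 0 := fun k => by
      simp only [hg]
      rw [hneg j, hx, mul_zero, map_zero, mul_zero, zero_mul]
    rw [tsum_congr this]; exact tsum_zero
  -- split the outer sum
  have houter : ∑' (j : ℤ) (k : ℤ), g j k
      = (∑' (j : ℕ) (k : ℤ), g (j : ℤ) k) + ∑' (j : ℕ) (k : ℤ), g (-((j : ℤ) + 1)) k :=
    tsum_of_nat_of_neg_add_one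
      (key _ fun j hx => hz1 j hx) (key _ fun j hx => hz2 j hx)
  -- evaluate the two halves
  have hhalf1 : ∑' (j : ℕ) (k : ℤ), g (j : ℤ) k = A + B := by
    have h1 : ∀ j : ℕ, ∑' (k : ℤ), g (j : ℤ) k
        = (∑' (k : ℕ), ((a ((j : ℤ) - (k : ℤ)) : ℝ) : ℂ) * (starRingEnd ℂ) (x j) * x k)
          + ∑' (k : ℕ),
            (ε : ℂ) * ((a ((j : ℤ) + (k : ℤ) + 1) : ℝ) : ℂ) * (starRingEnd ℂ) (x j) * x k := by
      intro j
      rw [hinnerZ (j : ℤ), tsum_congr (T1 j), tsum_congr (T2 j)]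
    rw [tsum_congr h1, hA, hB]
    refine Summable.tsum_add ?_ ?_
    · exact key _ fun j hx => by simp [hx]
    · exact key _ fun j hx => by simp [hx]
  have hhalf2 : ∑' (j : ℕ) (k : ℤ), g (-((j : ℤ) + 1)) k = B + A := by
    have h2 : ∀ j : ℕ, ∑' (k : ℤ), g (-((j : ℤ) + 1)) k
        = (∑' (k : ℕ),
            (ε : ℂ) * ((a ((j : ℤ) + (k : ℤ) + 1) : ℝ) : ℂ) * (starRingEnd ℂ) (x j) * x k)
          + ∑' (k : ℕ), ((a ((j : ℤ) - (k : ℤ)) : ℝ) : ℂ) * (starRingEnd ℂ) (x j) * x k := by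
      intro j
      rw [hinnerZ (-((j : ℤ) + 1)), tsum_congr (T3 j), tsum_congr (T4 j)]
    rw [tsum_congr h2, hA, hB]
    refine Summable.tsum_add ?_ ?_
    · exact key _ fun j hx => by simp [hx]
    · exact key _ fun j hx => by simp [hx]
  rw [houter, hhalf1, hhalf2]
  ring
end

section
/- Let a : ℤ → ℝ be even (a(−j) = a(j)) and absolutely summable (Σ_{j∈ℤ} |a(j)| < ∞), and let Λ(q) = Σ_{m∈ℤ} a(m) cos(mq). Then for every q ∈ ℝ and every integer j ≥ 1, Σ_{k=1}^{∞} (a(j−k) − a(j+k)) sin(qk) = Λ(q) sin(qj), the series converging absolutely. (The sine waves are eigenfunctions of the semi-infinite chain with ordinary boundary condition, with eigenvalue equal to the bulk dispersion.) -/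
/-!
Writing `F k = a (j - k) * sin (q k)` for `k ∈ ℤ`, the left-hand side is the sum of `F` over
`ℤ` folded onto `k ≥ 1` (`F 0 = 0`). Substituting `k = j - m` and expanding
`sin (q (j - m))` gives `Λ(q) sin (q j) - cos (q j) Σ_m a(m) sin (q m)`, and the last sum
vanishes because its summand is odd. Absolute convergence is free, since a real series that
converges unconditionally converges absolutely.
-/

open Real

theorem HasSum.subtype_one_le_add_neg {E : Type*} [AddCommMonoid E] [TopologicalSpace E]
    [ContinuousAdd E] {f : ℤ → E} {s : E} (hf : HasSum f s) (h0 : f 0 = 0) :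
    HasSum (fun k : {n : ℤ // 1 ≤ n} => f k + f (-k)) s := by
  have hnat : HasSum (fun n : ℕ => f n + f (-n)) s := by
    simpa [h0] using hf.nat_add_neg
  have htoNat_inj : Function.Injective fun k : {n : ℤ // 1 ≤ n} => (k : ℤ).toNat :=
    fun k l hkl => Subtype.ext <| by have := k.2; have := l.2; simp only at hkl; omega
  have hoff : ∀ n ∉ Set.range fun k : {n : ℤ // 1 ≤ n} => (k : ℤ).toNat, f n + f (-n) = 0 := by
    intro n hn
    obtain rfl : n = 0 := by
      by_contra hne
      exact hn ⟨⟨n, by omega⟩, by simp⟩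
    simp [h0]
  convert (htoNat_inj.hasSum_iff hoff).mpr hnat using 2 with k
  simp [Int.toNat_of_nonneg (zero_le_one.trans k.2)]

theorem Function.Odd.tsum_eq_zero {α β : Type*} [InvolutiveNeg α] [AddCommGroup β]
    [IsAddTorsionFree β] [TopologicalSpace β] [IsTopologicalAddGroup β] [T2Space β]
    {f : α → β} (hf : f.Odd) : ∑' x, f x = 0 := by
  have h := (Equiv.neg α).tsum_eq f
  simp only [Equiv.neg_apply, hf.eq, tsum_neg] at h
  exact neg_eq_self.mp h

theorem summable_mul_of_abs_le_one {ι : Type*} {a g : ι → ℝ} (ha : Summable fun i => |a i|)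
    (hg : ∀ i, |g i| ≤ 1) : Summable fun i => a i * g i :=
  ha.of_norm_bounded fun i => by
    simpa [abs_mul] using mul_le_of_le_one_right (abs_nonneg (a i)) (hg i)

/-- The bulk dispersion `Λ(q)`. -/
noncomputable def dispersion (a : ℤ → ℝ) (q : ℝ) : ℝ :=
  ∑' m : ℤ, a m * cos (m * q)

theorem hasSum_mul_sin_sub {a : ℤ → ℝ} (heven : ∀ m, a (-m) = a m)
    (hsum : Summable fun m => |a m|) (q : ℝ) (j : ℤ) :
    HasSum (fun k : ℤ => a (j - k) * sin (q * k)) (dispersion a q * sin (q * j)) := by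
  have hcos : HasSum (fun m : ℤ => a m * cos (m * q)) (dispersion a q) :=
    (summable_mul_of_abs_le_one hsum fun m => abs_cos_le_one _).hasSum
  have hsin : HasSum (fun m : ℤ => a m * sin (q * m)) 0 := by
    have hodd : Function.Odd fun m : ℤ => a m * sin (q * m) := fun m => by
      simp [heven, mul_neg]
    rw [← hodd.tsum_eq_zero]
    exact (summable_mul_of_abs_le_one hsum fun m => abs_sin_le_one _).hasSum
  have h := (hcos.mul_right (sin (q * j))).sub (hsin.mul_left (cos (q * j)))
  rw [mul_zero, sub_zero] at h
  refine (Equiv.subLeft j).hasSum_iff.mp (h.congr_fun fun m => ?_)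
  simp only [Function.comp_apply, Equiv.subLeft_apply, sub_sub_cancel, Int.cast_sub, mul_sub,
    sin_sub, mul_comm (m : ℝ) q]
  ring

theorem sine_waves_eigenfunctions_general (a : ℤ → ℝ) (heven : ∀ j : ℤ, a (-j) = a j)
    (hsum : Summable fun j : ℤ => |a j|) (q : ℝ) (j : ℤ) :
    (Summable fun k : {n : ℤ // 1 ≤ n} =>
        |(a (j - (k : ℤ)) - a (j + (k : ℤ))) * Real.sin (q * ((k : ℤ) : ℝ))|) ∧
    ∑' (k : {n : ℤ // 1 ≤ n}),
        (a (j - (k : ℤ)) - a (j + (k : ℤ))) * Real.sin (q * ((k : ℤ) : ℝ))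
      = (∑' (m : ℤ), a m * Real.cos ((m : ℝ) * q)) * Real.sin (q * (j : ℝ)) := by
  have hF := (hasSum_mul_sin_sub heven hsum q j).subtype_one_le_add_neg (by simp)
  replace hF : HasSum (fun k : {n : ℤ // 1 ≤ n} =>
      (a (j - k) - a (j + k)) * sin (q * ((k : ℤ) : ℝ))) _ := hF.congr_fun fun k => by
    simp only [sub_neg_eq_add, Int.cast_neg, mul_neg, sin_neg]
    ring
  exact ⟨hF.summable.abs, hF.tsum_eq⟩

/-- Let `a : ℤ → ℝ` be even and absolutely summable, and `Λ(q) = Σ_{m∈ℤ} a(m) cos(mq)`.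
Then for every `q ∈ ℝ` and every integer `j ≥ 1`,
`Σ_{k=1}^∞ (a(j−k) − a(j+k)) sin(qk) = Λ(q) sin(qj)`, the series converging
absolutely. -/
theorem sine_waves_eigenfunctions (a : ℤ → ℝ) (heven : ∀ j : ℤ, a (-j) = a j)
    (hsum : Summable fun j : ℤ => |a j|) (q : ℝ) (j : ℤ) (hj : 1 ≤ j) :
    (Summable fun k : {n : ℤ // 1 ≤ n} =>
        |(a (j - (k : ℤ)) - a (j + (k : ℤ))) * Real.sin (q * ((k : ℤ) : ℝ))|) ∧
    ∑' (k : {n : ℤ // 1 ≤ n}),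
        (a (j - (k : ℤ)) - a (j + (k : ℤ))) * Real.sin (q * ((k : ℤ) : ℝ))
      = (∑' (m : ℤ), a m * Real.cos ((m : ℝ) * q)) * Real.sin (q * (j : ℝ)) :=
  sine_waves_eigenfunctions_general a heven hsum q j
end

section
/- Let a : ℤ → ℝ be even (a(−j) = a(j)) and absolutely summable (Σ_{j∈ℤ} |a(j)| < ∞), and let Λ(q) = Σ_{m∈ℤ} a(m) cos(mq). Then for every q ∈ ℝ and every integer j ≥ 0, Σ_{k=0}^{∞} (a(j−k) + a(j+k+1)) cos(q(k+1/2)) = Λ(q) cos(q(j+1/2)), the series converging absolutely. (The half-integer cosine waves are eigenfunctions of the semi-infinite chain at the extraordinary boundary transition, with eigenvalue equal to the bulk dispersion.) -/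
/-!
Half-integer cosine waves are eigenfunctions of the semi-infinite chain at the
extraordinary boundary transition, with eigenvalue equal to the bulk dispersion
`Λ(q) = Σ_m a(m) cos(mq)`.
-/

set_option maxHeartbeats 1000000

/-- Let `a : ℤ → ℝ` be even and absolutely summable, and `Λ(q) = Σ_{m∈ℤ} a(m) cos(mq)`.
Then for every `q ∈ ℝ` and every integer `j ≥ 0`,
`Σ_{k=0}^∞ (a(j−k) + a(j+k+1)) cos(q(k+1/2)) = Λ(q) cos(q(j+1/2))`, the series
converging absolutely. -/
theorem cosine_waves_eigenfunctions (a : ℤ → ℝ) (heven : ∀ j : ℤ, a (-j) = a j)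
    (hsum : Summable fun j : ℤ => |a j|) (q : ℝ) (j : ℕ) :
    (Summable fun k : ℕ =>
        |(a ((j : ℤ) - (k : ℤ)) + a ((j : ℤ) + (k : ℤ) + 1))
          * Real.cos (q * ((k : ℝ) + 1/2))|) ∧
    ∑' (k : ℕ),
        (a ((j : ℤ) - (k : ℤ)) + a ((j : ℤ) + (k : ℤ) + 1)) * Real.cos (q * ((k : ℝ) + 1/2))
      = (∑' (m : ℤ), a m * Real.cos ((m : ℝ) * q)) * Real.cos (q * ((j : ℝ) + 1/2)) := by
  have habs : Summable a := hsum.of_abs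
  -- the extended ℤ-indexed function
  set h : ℤ → ℝ := fun k => a ((j : ℤ) - k) * Real.cos (q * ((k : ℝ) + 1/2)) with hh
  have hAsub : Summable fun k : ℤ => |a ((j : ℤ) - k)| :=
    ((Equiv.subLeft (j : ℤ)).summable_iff).mpr hsum
  have hS1 : Summable h := by
    apply Summable.of_abs
    apply Summable.of_nonneg_of_le (fun k => abs_nonneg _) _ hAsub
    intro k
    rw [abs_mul]
    calc |a ((j:ℤ) - k)| * |Real.cos (q * ((k:ℝ) + 1/2))|
        ≤ |a ((j:ℤ) - k)| * 1 := by
          gcongr; exact Real.abs_cos_le_one _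
      _ = |a ((j:ℤ) - k)| := mul_one _
  -- rewrite the negative-index terms
  have hneg : ∀ k : ℕ, h (-((k : ℤ) + 1)) =
      a ((j : ℤ) + (k : ℤ) + 1) * Real.cos (q * ((k : ℝ) + 1/2)) := by
    intro k
    simp only [hh]
    have h1 : (j : ℤ) - (-((k:ℤ) + 1)) = (j : ℤ) + (k : ℤ) + 1 := by ring
    have h2 : ((-((k:ℤ)+1) : ℤ) : ℝ) = -((k:ℝ)+1) := by push_cast; ring
    rw [h1, h2]
    congr 1
    rw [show q * (-((k:ℝ)+1) + 1/2) = -(q * ((k:ℝ) + 1/2)) by ring, Real.cos_neg]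
  have hterm : ∀ k : ℕ,
      (a ((j : ℤ) - (k : ℤ)) + a ((j : ℤ) + (k : ℤ) + 1)) * Real.cos (q * ((k : ℝ) + 1/2))
        = h (k : ℤ) + h (-((k : ℤ) + 1)) := by
    intro k
    rw [hneg]
    simp only [hh, Int.cast_natCast]
    ring
  constructor
  · have := (hS1.abs).nat_add_neg_add_one
    apply Summable.of_nonneg_of_le (fun k => abs_nonneg _) _ this
    intro k
    rw [hterm k]
    exact abs_add_le _ _
  · have e1 : (∑' (k : ℕ),
        (a ((j : ℤ) - (k : ℤ)) + a ((j : ℤ) + (k : ℤ) + 1)) * Real.cos (q * ((k : ℝ) + 1/2)))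
        = ∑' (k : ℤ), h k := by
      rw [← tsum_nat_add_neg_add_one hS1]
      exact tsum_congr hterm
    rw [e1]
    -- reindex m = j - k
    have e2 : (∑' (k : ℤ), h k) = ∑' (m : ℤ), a m * Real.cos (q * ((j : ℝ) - (m : ℝ) + 1/2)) := by
      rw [← (Equiv.subLeft (j : ℤ)).tsum_eq h]
      apply tsum_congr
      intro m
      simp only [hh, Equiv.subLeft_apply, sub_sub_cancel]
      congr 2
      push_cast
      ring
    rw [e2]
    -- split the cosine
    set C := Real.cos (q * ((j : ℝ) + 1/2)) with hC
    set S := Real.sin (q * ((j : ℝ) + 1/2)) with hS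
    have e3 : ∀ m : ℤ, a m * Real.cos (q * ((j : ℝ) - (m : ℝ) + 1/2))
        = (a m * Real.cos ((m : ℝ) * q)) * C + (a m * Real.sin ((m : ℝ) * q)) * S := by
      intro m
      rw [show q * ((j : ℝ) - (m : ℝ) + 1/2) = q * ((j : ℝ) + 1/2) - (m : ℝ) * q by ring,
        Real.cos_sub]
      ring
    have hsc : Summable fun m : ℤ => a m * Real.cos ((m : ℝ) * q) := by
      apply Summable.of_abs
      apply Summable.of_nonneg_of_le (fun k => abs_nonneg _) _ hsum
      intro m
      rw [abs_mul]
      calc |a m| * |Real.cos ((m:ℝ) * q)| ≤ |a m| * 1 := by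
            gcongr; exact Real.abs_cos_le_one _
        _ = |a m| := mul_one _
    have hss : Summable fun m : ℤ => a m * Real.sin ((m : ℝ) * q) := by
      apply Summable.of_abs
      apply Summable.of_nonneg_of_le (fun k => abs_nonneg _) _ hsum
      intro m
      rw [abs_mul]
      calc |a m| * |Real.sin ((m:ℝ) * q)| ≤ |a m| * 1 := by
            gcongr; exact Real.abs_sin_le_one _
        _ = |a m| := mul_one _
    rw [tsum_congr e3, Summable.tsum_add (hsc.mul_right C) (hss.mul_right S),
      tsum_mul_right, tsum_mul_right]
    -- the sine sum vanishes by parity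
    have hodd : (∑' m : ℤ, a m * Real.sin ((m : ℝ) * q)) = 0 := by
      have := (Equiv.neg ℤ).tsum_eq (fun m : ℤ => a m * Real.sin ((m : ℝ) * q))
      simp only [Equiv.neg_apply] at this
      have h2 : (∑' m : ℤ, a (-m) * Real.sin (((-m : ℤ) : ℝ) * q))
          = -∑' m : ℤ, a m * Real.sin ((m : ℝ) * q) := by
        rw [← tsum_neg]
        apply tsum_congr
        intro m
        rw [heven m]
        push_cast
        rw [show -(m:ℝ) * q = -((m:ℝ) * q) by ring, Real.sin_neg]
        ring
      have := this.symm.trans h2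
      linarith
    rw [hodd]
    ring
end

section
/- Let 0 < θ_1 < θ_2 < π, set (z_1, z_2, z_3, z_4) = (e^{iθ_1}, e^{iθ_2}, e^{i(2π−θ_2)}, e^{i(2π−θ_1)}), and let B_1 be the set of the four vectors β ∈ {−1/2, +1/2}^4 with β_1 + β_2 + β_3 + β_4 = 1. Then for every N ∈ ℕ: Σ_{β ∈ B_1} exp(iN(θ_1(β_1 − β_4) + θ_2(β_2 − β_3))) · ∏_{1 ≤ j < k ≤ 4} |z_j − z_k|^{2 β_j β_k} = √(sin θ_2 / sin θ_1) · 2cos(N θ_1) + √(sin θ_1 / sin θ_2) · 2cos(N θ_2). In particular the sum over the four minimal Fisher–Hartwig representations is real. -/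
/-!
The four points are symmetric under complex conjugation, `z₄ = z̄₁` and `z₃ = z̄₂`, so
`|z₁ - z₂| = |z₃ - z₄|` and `|z₁ - z₃| = |z₂ - z₄|`, while `|z₁ - z₄| = 2 sin θ₁` and
`|z₂ - z₃| = 2 sin θ₂`. If `β ∈ B₁` has its single `-1/2` in position `m`, then
`2 β_j β_k = -1/2` exactly on the three pairs containing `m`; the two conjugation-paired chords
cancel, and the weight is `√(sin θ₂ / sin θ₁)` for `m ∈ {1, 4}` and its inverse for
`m ∈ {2, 3}`. The phases of these representations are `e^{∓iNθ₁}` and `e^{∓iNθ₂}`, which add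
up to the cosines.
-/

noncomputable section
open scoped Classical

/-- `β`-value `+1/2` or `−1/2` encoded by a Boolean. -/
def bhalf (b : Bool) : ℝ := if b then 1/2 else -(1/2)

/-- The four jump points `(z_1, z_2, z_3, z_4) =
(e^{iθ_1}, e^{iθ_2}, e^{i(2π−θ_2)}, e^{i(2π−θ_1)})`. -/
def z4 (θ1 θ2 : ℝ) : Fin 4 → ℂ :=
  ![Complex.exp (Complex.I * (θ1 : ℂ)), Complex.exp (Complex.I * (θ2 : ℂ)),
    Complex.exp (Complex.I * ((2 * Real.pi - θ2 : ℝ) : ℂ)),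
    Complex.exp (Complex.I * ((2 * Real.pi - θ1 : ℝ) : ℂ))]

open Complex ComplexConjugate

theorem Fin.prod_univ_four_lt {M : Type*} [CommMonoid M] (f : Fin 4 → Fin 4 → M) :
    (∏ j : Fin 4, ∏ k : Fin 4, if j < k then f j k else 1) =
      f 0 1 * f 0 2 * f 0 3 * f 1 2 * f 1 3 * f 2 3 := by
  simp [Fin.prod_univ_four, mul_assoc]

theorem rpow_two_mul_bhalf_mul_bhalf {x : ℝ} (hx : 0 ≤ x) (b c : Bool) :
    x ^ (2 * bhalf b * bhalf c) = if b = c then √x else (√x)⁻¹ := by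
  cases b <;> cases c <;> norm_num [bhalf, Real.sqrt_eq_rpow, Real.rpow_neg hx]

theorem filter_sum_bhalf_eq_one :
    Finset.univ.filter (fun σ : Fin 4 → Bool => ∑ j, bhalf (σ j) = 1) =
      {![false, true, true, true], ![true, false, true, true],
        ![true, true, false, true], ![true, true, true, false]} := by
  ext σ
  obtain ⟨a, b, c, d, rfl⟩ : ∃ a b c d, σ = ![a, b, c, d] :=
    ⟨σ 0, σ 1, σ 2, σ 3, by ext j; fin_cases j <;> rfl⟩
  cases a <;> cases b <;> cases c <;> cases d <;>
    simp [Fin.sum_univ_four, bhalf, funext_iff, Fin.forall_fin_succ] <;> norm_num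

theorem sum_filter_sum_bhalf_eq_one {M : Type*} [AddCommMonoid M] (F : (Fin 4 → Bool) → M) :
    ∑ σ ∈ Finset.univ.filter (fun σ : Fin 4 → Bool => ∑ j, bhalf (σ j) = 1), F σ =
      F ![false, true, true, true] + F ![true, false, true, true] +
        F ![true, true, false, true] + F ![true, true, true, false] := by
  rw [filter_sum_bhalf_eq_one, Finset.sum_insert (by decide), Finset.sum_insert (by decide),
    Finset.sum_insert (by decide), Finset.sum_singleton, add_assoc, add_assoc]

theorem exp_I_mul_two_pi_sub (θ : ℝ) :
    exp (I * ((2 * Real.pi - θ : ℝ) : ℂ)) = conj (exp (I * θ)) := by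
  rw [← exp_conj, map_mul, conj_I, conj_ofReal,
    show I * ((2 * Real.pi - θ : ℝ) : ℂ) = -I * θ + 2 * Real.pi * I by push_cast; ring,
    exp_add, exp_two_pi_mul_I, mul_one]

theorem exp_I_mul_ne_of_mem_Icc {θ φ : ℝ} (hθ : θ ∈ Set.Icc 0 Real.pi)
    (hφ : φ ∈ Set.Icc 0 Real.pi) (hne : θ ≠ φ) :
    exp (I * θ) ≠ exp (I * φ) ∧ exp (I * θ) ≠ conj (exp (I * φ)) := by
  have hcos : Real.cos θ ≠ Real.cos φ := fun h => hne (Real.injOn_cos hθ hφ h)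
  constructor <;> intro h <;> apply hcos <;> simpa [exp_re] using congrArg re h

theorem norm_exp_I_mul_sub_conj (θ : ℝ) :
    ‖exp (I * θ) - conj (exp (I * θ))‖ = 2 * |Real.sin θ| := by
  rw [sub_conj, norm_mul, norm_I, mul_one, norm_real, Real.norm_eq_abs, abs_mul, abs_two]
  simp [exp_im]

def fhWeight (z : Fin 4 → ℂ) (σ : Fin 4 → Bool) : ℝ :=
  ∏ j : Fin 4, ∏ k : Fin 4,
    if j < k then ‖z j - z k‖ ^ (2 * bhalf (σ j) * bhalf (σ k)) else 1

theorem fhWeight_eq_prod_sqrt (z : Fin 4 → ℂ) (σ : Fin 4 → Bool) :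
    fhWeight z σ = ∏ j : Fin 4, ∏ k : Fin 4, if j < k then
      (if σ j = σ k then √‖z j - z k‖ else (√‖z j - z k‖)⁻¹) else 1 := by
  simp only [fhWeight, rpow_two_mul_bhalf_mul_bhalf (norm_nonneg _)]

section ConjSymm

variable {z : Fin 4 → ℂ} (h3 : z 3 = conj (z 0)) (h2 : z 2 = conj (z 1))
include h3 h2

theorem norm_sub_of_conj_symm :
    ‖z 2 - z 3‖ = ‖z 0 - z 1‖ ∧ ‖z 1 - z 3‖ = ‖z 0 - z 2‖ := by
  constructor
  · rw [h2, h3, ← map_sub, norm_conj, norm_sub_rev]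
  · rw [h2, h3, ← norm_conj, map_sub, conj_conj, norm_sub_rev]

theorem fhWeight_of_conj_symm (h01 : z 0 ≠ z 1) (h02 : z 0 ≠ z 2) :
    fhWeight z ![false, true, true, true] = √(‖z 1 - z 2‖ / ‖z 0 - z 3‖) ∧
    fhWeight z ![true, false, true, true] = √(‖z 0 - z 3‖ / ‖z 1 - z 2‖) ∧
    fhWeight z ![true, true, false, true] = √(‖z 0 - z 3‖ / ‖z 1 - z 2‖) ∧
    fhWeight z ![true, true, true, false] = √(‖z 1 - z 2‖ / ‖z 0 - z 3‖) := by
  obtain ⟨h23, h13⟩ := norm_sub_of_conj_symm h3 h2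
  have hd01 : √‖z 0 - z 1‖ ≠ 0 := by simpa [sub_eq_zero] using h01
  have hd02 : √‖z 0 - z 2‖ ≠ 0 := by simpa [sub_eq_zero] using h02
  simp only [fhWeight_eq_prod_sqrt, Fin.prod_univ_four_lt, h23, h13,
    Real.sqrt_div' _ (norm_nonneg _)]
  refine ⟨?_, ?_, ?_, ?_⟩ <;> simp <;> field_simp

end ConjSymm

theorem fhWeight_z4 {θ1 θ2 : ℝ} (h1 : 0 < θ1) (h12 : θ1 < θ2) (h2 : θ2 < Real.pi) :
    fhWeight (z4 θ1 θ2) ![false, true, true, true] = √(Real.sin θ2 / Real.sin θ1) ∧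
    fhWeight (z4 θ1 θ2) ![true, false, true, true] = √(Real.sin θ1 / Real.sin θ2) ∧
    fhWeight (z4 θ1 θ2) ![true, true, false, true] = √(Real.sin θ1 / Real.sin θ2) ∧
    fhWeight (z4 θ1 θ2) ![true, true, true, false] = √(Real.sin θ2 / Real.sin θ1) := by
  have hs1 : 0 < Real.sin θ1 := Real.sin_pos_of_pos_of_lt_pi h1 (h12.trans h2)
  have hs2 : 0 < Real.sin θ2 := Real.sin_pos_of_pos_of_lt_pi (h1.trans h12) h2
  obtain ⟨h01, h02⟩ := exp_I_mul_ne_of_mem_Icc ⟨h1.le, (h12.trans h2).le⟩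
    ⟨(h1.trans h12).le, h2.le⟩ h12.ne
  have hd03 : ‖z4 θ1 θ2 0 - z4 θ1 θ2 3‖ = 2 * Real.sin θ1 := by
    simp only [z4, Matrix.cons_val, exp_I_mul_two_pi_sub, norm_exp_I_mul_sub_conj, abs_of_pos hs1]
  have hd12 : ‖z4 θ1 θ2 1 - z4 θ1 θ2 2‖ = 2 * Real.sin θ2 := by
    simp only [z4, Matrix.cons_val, exp_I_mul_two_pi_sub, norm_exp_I_mul_sub_conj, abs_of_pos hs2]
  have hw := fhWeight_of_conj_symm (z := z4 θ1 θ2) (exp_I_mul_two_pi_sub θ1)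
    (exp_I_mul_two_pi_sub θ2) h01 (by rwa [← exp_I_mul_two_pi_sub] at h02)
  rwa [hd03, hd12, mul_div_mul_left _ _ two_ne_zero, mul_div_mul_left _ _ two_ne_zero] at hw

/-- Let `0 < θ_1 < θ_2 < π` and let `B₁` be the set of the four vectors
`β ∈ {±1/2}^4` with `β_1 + β_2 + β_3 + β_4 = 1` (parameterised here by Boolean strings
`σ` via `β_j = bhalf (σ j)`).  Then for every `N`:
`Σ_{β∈B₁} e^{iN(θ_1(β_1−β_4) + θ_2(β_2−β_3))} ∏_{j<k} |z_j−z_k|^{2β_jβ_k}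
  = √(sinθ_2/sinθ_1)·2cos(Nθ_1) + √(sinθ_1/sinθ_2)·2cos(Nθ_2)`;
in particular the sum is real. -/
theorem minimal_FH_representations_sum (θ1 θ2 : ℝ)
    (h1 : 0 < θ1) (h12 : θ1 < θ2) (h2 : θ2 < Real.pi) (N : ℕ) :
    ∑ σ ∈ Finset.univ.filter (fun σ : Fin 4 → Bool => ∑ j, bhalf (σ j) = 1),
        Complex.exp (Complex.I * (N : ℂ) *
            ((θ1 * (bhalf (σ 0) - bhalf (σ 3)) + θ2 * (bhalf (σ 1) - bhalf (σ 2)) : ℝ) : ℂ))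
          * ((∏ j : Fin 4, ∏ k : Fin 4,
              if j < k then
                ‖z4 θ1 θ2 j - z4 θ1 θ2 k‖ ^ (2 * bhalf (σ j) * bhalf (σ k))
              else 1 : ℝ) : ℂ)
      = ((Real.sqrt (Real.sin θ2 / Real.sin θ1) * (2 * Real.cos ((N : ℝ) * θ1))
          + Real.sqrt (Real.sin θ1 / Real.sin θ2) * (2 * Real.cos ((N : ℝ) * θ2)) : ℝ) : ℂ) := by
  obtain ⟨w0, w1, w2, w3⟩ := fhWeight_z4 h1 h12 h2
  change ∑ σ ∈ _, _ * ((fhWeight (z4 θ1 θ2) σ : ℝ) : ℂ) = _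
  rw [sum_filter_sum_bhalf_eq_one, w0, w1, w2, w3]
  norm_num [bhalf, Matrix.cons_val_three, Matrix.cons_val_two, two_cos]
  ring_nf

end
end
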